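/- Let (L, d, [·,·]) be a dgla with a decomposition L = A ⊕ X of graded subspaces satisfying [A,A] = 0, [X,X] ⊆ X, [X,A] ⊆ A, d(A) ⊆ X, d(X) = 0. Let (q, Q) ∈ A¹ × X¹ be such that q + Q is a Maurer–Cartan element, and let b ∈ A⁰. Then the gauge-transformed element (q', Q') with Q' := Q − db and q' := q + [b, Q] − (1/2)[b, db] is again a Maurer–Cartan element, i.e. dq' + (1/2)[Q',Q'] = 0 and [Q',q'] = 0. -/

import Mathlib

/-!
Since `A` is abelian and stable under `[X, ·]`, the brackets `[b, q]`, `[b, [b, Q]]` and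
`[b, [b, db]]` vanish, so Leibniz gives `[db, a] = -[b, da]` for each of `a = q, [b, Q], [b, db]`.
Combined with the fact that the degree-zero element `b` acts on `[x, y]` (for odd `x, y`) as a
derivation, this yields `[Q, [b, Q]] = [db, q]`, `[Q, [b, db]] = -2 [db, [b, Q]]` and
`[db, [b, db]] = 0`, after which both Maurer–Cartan equations for `(q', Q')` reduce to those for
`(q, Q)` by expanding bilinearly.
-/

section GradedBracket

variable {L : Type*} [AddCommGroup L] [Module ℝ L]

def BracketAddsGrades (grade : ℤ → Submodule ℝ L) (bk : L →ₗ[ℝ] L →ₗ[ℝ] L) : Prop :=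
  ∀ (i j : ℤ), ∀ x ∈ grade i, ∀ y ∈ grade j, bk x y ∈ grade (i + j)

def MapRaisesGrade (grade : ℤ → Submodule ℝ L) (d : L →ₗ[ℝ] L) : Prop :=
  ∀ (i : ℤ), ∀ x ∈ grade i, d x ∈ grade (i + 1)

def GradedAntisymm (grade : ℤ → Submodule ℝ L) (bk : L →ₗ[ℝ] L →ₗ[ℝ] L) : Prop :=
  ∀ (i j : ℤ), ∀ x ∈ grade i, ∀ y ∈ grade j, bk x y = -(((-1 : ℝ) ^ (i * j)) • bk y x)

def GradedJacobi (grade : ℤ → Submodule ℝ L) (bk : L →ₗ[ℝ] L →ₗ[ℝ] L) : Prop :=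
  ∀ (i j : ℤ), ∀ x ∈ grade i, ∀ y ∈ grade j, ∀ z,
    bk x (bk y z) = bk (bk x y) z + ((-1 : ℝ) ^ (i * j)) • bk y (bk x z)

def GradedLeibniz (grade : ℤ → Submodule ℝ L) (d : L →ₗ[ℝ] L) (bk : L →ₗ[ℝ] L →ₗ[ℝ] L) : Prop :=
  ∀ (i : ℤ), ∀ x ∈ grade i, ∀ y, d (bk x y) = bk (d x) y + ((-1 : ℝ) ^ i) • bk x (d y)

variable {grade : ℤ → Submodule ℝ L} {d : L →ₗ[ℝ] L} {bk : L →ₗ[ℝ] L →ₗ[ℝ] L}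

theorem MapRaisesGrade.mem_one_of_mem_zero (hgrd : MapRaisesGrade grade d) {x : L}
    (hx : x ∈ grade 0) : d x ∈ grade 1 := by
  simpa using hgrd 0 x hx

theorem GradedAntisymm.comm_of_mem_one (hanti : GradedAntisymm grade bk)
    {x y : L} (hx : x ∈ grade 1) (hy : y ∈ grade 1) : bk x y = bk y x := by
  simpa using hanti 1 1 x hx y hy

theorem GradedAntisymm.eq_neg_of_mem_zero (hanti : GradedAntisymm grade bk)
    {j : ℤ} {x y : L} (hx : x ∈ grade 0) (hy : y ∈ grade j) : bk x y = -bk y x := by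
  simpa using hanti 0 j x hx y hy

theorem GradedLeibniz.map_bracket_of_mem_zero (hleib : GradedLeibniz grade d bk)
    {x : L} (hx : x ∈ grade 0) (y : L) : d (bk x y) = bk (d x) y + bk x (d y) := by
  simpa using hleib 0 x hx y

theorem GradedLeibniz.bracket_map_eq_neg (hleib : GradedLeibniz grade d bk)
    {b a : L} (hb : b ∈ grade 0) (hba : bk b a = 0) : bk (d b) a = -bk b (d a) := by
  have h := hleib.map_bracket_of_mem_zero hb a
  rw [hba, map_zero] at h
  exact eq_neg_of_add_eq_zero_left h.symm

theorem bracket_bracket_of_mem_zero_of_mem_one (hgrb : BracketAddsGrades grade bk)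
    (hanti : GradedAntisymm grade bk) (hjac : GradedJacobi grade bk)
    {b x y : L} (hb : b ∈ grade 0) (hx : x ∈ grade 1) (hy : y ∈ grade 1) :
    bk b (bk x y) = bk y (bk b x) + bk x (bk b y) := by
  have hbx : bk b x ∈ grade 1 := by simpa using hgrb 0 1 b hb x hx
  rw [← hanti.comm_of_mem_one hbx hy]
  simpa using hjac 0 1 b hb x hx y

variable {q Q b : L}

theorem gauge_curvature_eq_zero
    (hgrd : MapRaisesGrade grade d) (hd2 : ∀ a, d (d a) = 0)
    (hanti : GradedAntisymm grade bk) (hleib : GradedLeibniz grade d bk)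
    (hQ1 : Q ∈ grade 1) (hdQ : d Q = 0) (hb0 : b ∈ grade 0)
    (hMC1 : d q + (1 / 2 : ℝ) • bk Q Q = 0) :
    d (q + bk b Q - (1 / 2 : ℝ) • bk b (d b))
      + (1 / 2 : ℝ) • bk (Q - d b) (Q - d b) = 0 := by
  have hdb1 := hgrd.mem_one_of_mem_zero hb0
  simp only [map_add, map_sub, map_smul, LinearMap.sub_apply, hleib.map_bracket_of_mem_zero hb0,
    hdQ, hd2, map_zero, add_zero, hanti.comm_of_mem_one hQ1 hdb1]
  linear_combination (norm := module) hMC1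

theorem bracket_bracket_self_of_maurerCartan (hgrb : BracketAddsGrades grade bk)
    (hanti : GradedAntisymm grade bk) (hjac : GradedJacobi grade bk)
    (hleib : GradedLeibniz grade d bk) (hQ1 : Q ∈ grade 1) (hb0 : b ∈ grade 0)
    (hbq : bk b q = 0) (hMC1 : d q + (1 / 2 : ℝ) • bk Q Q = 0) :
    bk Q (bk b Q) = bk (d b) q := by
  have hder := bracket_bracket_of_mem_zero_of_mem_one hgrb hanti hjac hb0 hQ1 hQ1
  have hQQ : bk Q Q = (-2 : ℝ) • d q := by
    linear_combination (norm := module) (2 : ℝ) • hMC1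
  have hdbq := hleib.bracket_map_eq_neg hb0 hbq
  rw [hQQ, map_smul] at hder
  linear_combination (norm := module) (-1 / 2 : ℝ) • hder - hdbq

theorem bracket_bracket_map_eq_neg_two_smul (hgrd : MapRaisesGrade grade d)
    (hgrb : BracketAddsGrades grade bk) (hanti : GradedAntisymm grade bk)
    (hjac : GradedJacobi grade bk) (hleib : GradedLeibniz grade d bk)
    (hQ1 : Q ∈ grade 1) (hdQ : d Q = 0) (hb0 : b ∈ grade 0) (hbbQ : bk b (bk b Q) = 0) :
    bk Q (bk b (d b)) = (-2 : ℝ) • bk (d b) (bk b Q) := by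
  have hdb1 := hgrd.mem_one_of_mem_zero hb0
  have hder := bracket_bracket_of_mem_zero_of_mem_one hgrb hanti hjac hb0 hdb1 hQ1
  have hdbbQ := hleib.bracket_map_eq_neg hb0 hbbQ
  rw [hleib.map_bracket_of_mem_zero hb0, hdQ, map_zero, add_zero] at hdbbQ
  linear_combination (norm := module) hdbbQ - hder

theorem bracket_map_bracket_map_eq_zero (hgrd : MapRaisesGrade grade d)
    (hd2 : ∀ a, d (d a) = 0) (hgrb : BracketAddsGrades grade bk)
    (hanti : GradedAntisymm grade bk)
    (hjac : GradedJacobi grade bk) (hleib : GradedLeibniz grade d bk)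
    (hb0 : b ∈ grade 0) (hbbdb : bk b (bk b (d b)) = 0) :
    bk (d b) (bk b (d b)) = 0 := by
  have hdb1 := hgrd.mem_one_of_mem_zero hb0
  have hder := bracket_bracket_of_mem_zero_of_mem_one hgrb hanti hjac hb0 hdb1 hdb1
  have hdbbdb := hleib.bracket_map_eq_neg hb0 hbbdb
  rw [hleib.map_bracket_of_mem_zero hb0, hd2, map_zero, add_zero] at hdbbdb
  linear_combination (norm := module) (1 / 3 : ℝ) • (hdbbdb - hder)

theorem gauge_bracket_eq_zero (hgrd : MapRaisesGrade grade d)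
    (hd2 : ∀ a, d (d a) = 0) (hgrb : BracketAddsGrades grade bk)
    (hanti : GradedAntisymm grade bk)
    (hjac : GradedJacobi grade bk) (hleib : GradedLeibniz grade d bk)
    (hQ1 : Q ∈ grade 1) (hdQ : d Q = 0) (hb0 : b ∈ grade 0) (hbq : bk b q = 0)
    (hbbQ : bk b (bk b Q) = 0) (hbbdb : bk b (bk b (d b)) = 0)
    (hMC1 : d q + (1 / 2 : ℝ) • bk Q Q = 0) (hMC2 : bk Q q = 0) :
    bk (Q - d b) (q + bk b Q - (1 / 2 : ℝ) • bk b (d b)) = 0 := by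
  simp only [map_add, map_sub, map_smul, LinearMap.sub_apply]
  rw [hMC2, bracket_bracket_self_of_maurerCartan hgrb hanti hjac hleib hQ1 hb0 hbq hMC1,
    bracket_bracket_map_eq_neg_two_smul hgrd hgrb hanti hjac hleib hQ1 hdQ hb0 hbbQ,
    bracket_map_bracket_map_eq_zero hgrd hd2 hgrb hanti hjac hleib hb0 hbbdb]
  module

end GradedBracket

theorem gauge_transform_maurer_cartan_general
    {L : Type} [AddCommGroup L] [Module ℝ L]
    (grade : ℤ → Submodule ℝ L)
    (d : L →ₗ[ℝ] L) (bk : L →ₗ[ℝ] L →ₗ[ℝ] L)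
    (hgrd : ∀ (i : ℤ), ∀ x ∈ grade i, d x ∈ grade (i + 1))
    (hd2 : ∀ a, d (d a) = 0)
    (hgrb : ∀ (i j : ℤ), ∀ x ∈ grade i, ∀ y ∈ grade j, bk x y ∈ grade (i + j))
    (hanti : ∀ (i j : ℤ), ∀ x ∈ grade i, ∀ y ∈ grade j,
      bk x y = -(((-1 : ℝ) ^ (i * j)) • bk y x))
    (hjac : ∀ (i j : ℤ), ∀ x ∈ grade i, ∀ y ∈ grade j, ∀ z,
      bk x (bk y z) = bk (bk x y) z + ((-1 : ℝ) ^ (i * j)) • bk y (bk x z))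
    (hleib : ∀ (i : ℤ), ∀ x ∈ grade i, ∀ y,
      d (bk x y) = bk (d x) y + ((-1 : ℝ) ^ i) • bk x (d y))
    (A X : Submodule ℝ L)
    (hAA : ∀ a ∈ A, ∀ a' ∈ A, bk a a' = 0)
    (hXA : ∀ x ∈ X, ∀ a ∈ A, bk x a ∈ A)
    (hdA : ∀ a ∈ A, d a ∈ X)
    (hdX : ∀ x ∈ X, d x = 0)
    (q Q : L) (hqA : q ∈ A)
    (hQX : Q ∈ X) (hQ1 : Q ∈ grade 1)
    -- (q, Q) is Maurer–Cartan
    (hMC1 : d q + (1 / 2 : ℝ) • bk Q Q = 0)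
    (hMC2 : bk Q q = 0)
    (b : L) (hbA : b ∈ A) (hb0 : b ∈ grade 0) :
    d (q + bk b Q - (1 / 2 : ℝ) • bk b (d b))
        + (1 / 2 : ℝ) • bk (Q - d b) (Q - d b) = 0
      ∧ bk (Q - d b) (q + bk b Q - (1 / 2 : ℝ) • bk b (d b)) = 0 := by
  have hdQ : d Q = 0 := hdX Q hQX
  have hdb1 : d b ∈ grade 1 := MapRaisesGrade.mem_one_of_mem_zero hgrd hb0
  have hbracket_mem : ∀ {j : ℤ}, ∀ x ∈ X, x ∈ grade j → bk b x ∈ A := fun x hxX hxj => by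
    rw [GradedAntisymm.eq_neg_of_mem_zero hanti hb0 hxj]
    exact neg_mem (hXA x hxX b hbA)
  have hbbQ := hAA b hbA _ (hbracket_mem Q hQX hQ1)
  have hbbdb := hAA b hbA _ (hbracket_mem (d b) (hdA b hbA) hdb1)
  exact ⟨gauge_curvature_eq_zero hgrd hd2 hanti hleib hQ1 hdQ hb0 hMC1,
    gauge_bracket_eq_zero hgrd hd2 hgrb hanti hjac hleib hQ1 hdQ hb0 (hAA b hbA q hqA)
      hbbQ hbbdb hMC1 hMC2⟩

/-- In a dgla with a splitting `L = A ⊕ X` as in Statement 1,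
if `(q, Q) ∈ A¹ × X¹` is Maurer–Cartan and `b ∈ A⁰`, then the gauge transform
`Q' = Q − db`, `q' = q + [b,Q] − (1/2)[b,db]` is again Maurer–Cartan:
`dq' + (1/2)[Q',Q'] = 0` and `[Q',q'] = 0`. -/
theorem gauge_transform_maurer_cartan
    {L : Type} [AddCommGroup L] [Module ℝ L]
    (grade : ℤ → Submodule ℝ L)
    (hdec : DirectSum.IsInternal grade)
    (d : L →ₗ[ℝ] L) (bk : L →ₗ[ℝ] L →ₗ[ℝ] L)
    (hgrd : ∀ (i : ℤ), ∀ x ∈ grade i, d x ∈ grade (i + 1))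
    (hd2 : ∀ a, d (d a) = 0)
    (hgrb : ∀ (i j : ℤ), ∀ x ∈ grade i, ∀ y ∈ grade j, bk x y ∈ grade (i + j))
    (hanti : ∀ (i j : ℤ), ∀ x ∈ grade i, ∀ y ∈ grade j,
      bk x y = -(((-1 : ℝ) ^ (i * j)) • bk y x))
    (hjac : ∀ (i j : ℤ), ∀ x ∈ grade i, ∀ y ∈ grade j, ∀ z,
      bk x (bk y z) = bk (bk x y) z + ((-1 : ℝ) ^ (i * j)) • bk y (bk x z))
    (hleib : ∀ (i : ℤ), ∀ x ∈ grade i, ∀ y,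
      d (bk x y) = bk (d x) y + ((-1 : ℝ) ^ i) • bk x (d y))
    (A X : Submodule ℝ L)
    (hcompl : IsCompl A X)
    (hgraded : ∀ (i : ℤ), ∀ x ∈ grade i,
      ∃ a ∈ A ⊓ grade i, ∃ b ∈ X ⊓ grade i, x = a + b)
    (hAA : ∀ a ∈ A, ∀ a' ∈ A, bk a a' = 0)
    (hXX : ∀ x ∈ X, ∀ y ∈ X, bk x y ∈ X)
    (hXA : ∀ x ∈ X, ∀ a ∈ A, bk x a ∈ A)
    (hdA : ∀ a ∈ A, d a ∈ X)
    (hdX : ∀ x ∈ X, d x = 0)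
    (q Q : L) (hqA : q ∈ A) (hq1 : q ∈ grade 1)
    (hQX : Q ∈ X) (hQ1 : Q ∈ grade 1)
    -- (q, Q) is Maurer–Cartan
    (hMC1 : d q + (1 / 2 : ℝ) • bk Q Q = 0)
    (hMC2 : bk Q q = 0)
    (b : L) (hbA : b ∈ A) (hb0 : b ∈ grade 0) :
    d (q + bk b Q - (1 / 2 : ℝ) • bk b (d b))
        + (1 / 2 : ℝ) • bk (Q - d b) (Q - d b) = 0
      ∧ bk (Q - d b) (q + bk b Q - (1 / 2 : ℝ) • bk b (d b)) = 0 :=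
  gauge_transform_maurer_cartan_general grade d bk hgrd hd2 hgrb hanti hjac hleib A X hAA hXA hdA
    hdX q Q hqA hQX hQ1 hMC1 hMC2 b hbA hb0
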